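/- For every y ≥ 0 the function z ↦ Φ(y,z) is nondecreasing and of class C¹ on [0,∞), and it is strictly increasing on [y,∞). The partial derivative ∂_zΦ is given by ∂_zΦ(y,z) = 0 for z < y and ∂_zΦ(y,z) = ((ψ'(z) − zψ''(z))/2)·(1 − y²/z²) for z ≥ y, and ∂_zΦ is continuous and strictly positive on the set {(y,z) : z > y ≥ 0}. -/

import Mathlib

set_option autoImplicit false

open Set Filter Topology

/-! Concavity and strict monotonicity of `ψ` give `ψ' > 0` and `ψ'' ≤ 0`, so `ψ'(z) - z ψ''(z) > 0`.
For `z < y` the energy `Φ(y, z) = ψ(y)` does not depend on `z`; for `z > y` it is the unloading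
branch, differentiated by the quotient rule. Both branches take the value `ψ(y)` at `z = y`, and
both one-sided derivatives vanish there because of the factor `1 - y² / z²`, so `Φ(y, ·)` is `C¹`.
Monotonicity then follows from the sign of the derivative. -/

section Concave

variable {f f' : ℝ → ℝ} {S : Set ℝ} {a x y f'' : ℝ}

lemma ConcaveOn.antitoneOn_of_hasDerivWithinAt (hf : ConcaveOn ℝ S f)
    (hd : ∀ x ∈ S, HasDerivWithinAt f (f' x) S x) : AntitoneOn f' S := by
  intro x hx y hy hxy
  rcases hxy.eq_or_lt with rfl | hxy
  · rfl
  exact (hf.le_slope_of_hasDerivWithinAt hx hy hxy (hd y hy)).trans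
    (hf.slope_le_of_hasDerivWithinAt hx hy hxy (hd x hx))

lemma ConcaveOn.deriv_pos_of_strictMonoOn (hf : ConcaveOn ℝ S f) (hmono : StrictMonoOn f S)
    (hx : x ∈ S) (hy : y ∈ S) (hxy : x < y) (hd : HasDerivWithinAt f f'' S x) : 0 < f'' :=
  (hmono.slope_pos hx hy hxy.ne).trans_le (hf.slope_le_of_hasDerivWithinAt hx hy hxy hd)

lemma accPt_principal_Ici (hx : a ≤ x) : AccPt x (𝓟 (Ici a)) :=
  accPt_principal_iff_nhdsWithin.2 <|
    (nhdsGT_neBot x).mono (nhdsWithin_mono _ fun _ hz => ⟨hx.trans (le_of_lt hz), ne_of_gt hz⟩)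

lemma ConcaveOn.secondDeriv_nonpos (hf : ConcaveOn ℝ (Ici a) f)
    (hd : ∀ x ∈ Ici a, HasDerivWithinAt f (f' x) (Ici a) x) (hx : a ≤ x)
    (hd2 : HasDerivWithinAt f' f'' (Ici a) x) : f'' ≤ 0 :=
  hd2.nonpos_of_antitoneOn (accPt_principal_Ici hx) (hf.antitoneOn_of_hasDerivWithinAt hd)

end Concave

noncomputable def cohesiveBranch (ψ ψd : ℝ → ℝ) (y z : ℝ) : ℝ :=
  ψd z / (2 * z) * y ^ 2 + ψ z - z * ψd z / 2

noncomputable def cohesiveEnergy (ψ ψd : ℝ → ℝ) (y z : ℝ) : ℝ :=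
  if y < z then cohesiveBranch ψ ψd y z else ψ y

/-- At `y = z = 0`, Lean's `0 / 0 = 0` makes this `ψ'(0) / 2`, the true derivative of `Φ(0, ·)`. -/
noncomputable def cohesiveEnergyDerivZ (ψd ψdd : ℝ → ℝ) (y z : ℝ) : ℝ :=
  if z < y then 0 else (ψd z - z * ψdd z) / 2 * (1 - y ^ 2 / z ^ 2)

section Cohesive

variable {ψ ψd ψdd : ℝ → ℝ} {s : Set ℝ} {y z : ℝ}

lemma cohesiveBranch_self : cohesiveBranch ψ ψd y y = ψ y := by
  rcases eq_or_ne y 0 with rfl | hy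
  · simp [cohesiveBranch]
  · simp only [cohesiveBranch]
    field_simp
    ring

lemma eqOn_cohesiveEnergy_Iic : EqOn (cohesiveEnergy ψ ψd y) (fun _ => ψ y) (Iic y) :=
  fun _ hz => if_neg (not_lt.2 hz)

lemma eqOn_cohesiveEnergy_Ici : EqOn (cohesiveEnergy ψ ψd y) (cohesiveBranch ψ ψd y) (Ici y) := by
  intro z hz
  rcases (mem_Ici.1 hz).eq_or_lt with rfl | hyz
  · exact (if_neg (lt_irrefl _)).trans cohesiveBranch_self.symm
  · exact if_pos hyz

lemma hasDerivWithinAt_cohesiveBranch (hψ : HasDerivWithinAt ψ (ψd z) s z)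
    (hψd : HasDerivWithinAt ψd (ψdd z) s z) (hzy : z ≠ 0 ∨ y = 0) :
    HasDerivWithinAt (cohesiveBranch ψ ψd y)
      ((ψd z - z * ψdd z) / 2 * (1 - y ^ 2 / z ^ 2)) s z := by
  have hmul : HasDerivWithinAt (fun w => w * ψd w) (ψd z + z * ψdd z) s z :=
    ((hasDerivWithinAt_id z s).mul hψd).congr_deriv (by simp)
  rcases hzy with hz | rfl
  · have hquot : HasDerivWithinAt (fun w => ψd w / (2 * w))
        ((ψdd z * (2 * z) - ψd z * 2) / (2 * z) ^ 2) s z :=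
      hψd.div (((hasDerivWithinAt_id z s).const_mul 2).congr_deriv (mul_one 2)) (by positivity)
    refine (((hquot.mul_const (y ^ 2)).add hψ).sub (hmul.div_const 2)).congr_deriv ?_
    field_simp
    ring
  · refine (hψ.sub (hmul.div_const 2)).congr (fun w _ => by simp [cohesiveBranch])
      (by simp [cohesiveBranch]) |>.congr_deriv ?_
    ring

lemma hasDerivWithinAt_cohesiveEnergy (hψ : HasDerivWithinAt ψ (ψd z) (Ici 0) z)
    (hψd : HasDerivWithinAt ψd (ψdd z) (Ici 0) z) (hy : 0 ≤ y) (hz : 0 ≤ z) :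
    HasDerivWithinAt (cohesiveEnergy ψ ψd y) (cohesiveEnergyDerivZ ψd ψdd y z) (Ici 0) z := by
  have hright (hyz : y ≤ z) :
      HasDerivWithinAt (cohesiveEnergy ψ ψd y) (cohesiveEnergyDerivZ ψd ψdd y z) (Ici y) z := by
    have hbranch := hasDerivWithinAt_cohesiveBranch (y := y) hψ hψd
      (or_iff_not_imp_left.2 fun hz0 => le_antisymm (not_not.1 hz0 ▸ hyz) hy)
    rw [cohesiveEnergyDerivZ, if_neg (not_lt.2 hyz)]
    exact (hbranch.mono (Ici_subset_Ici.2 hy)).congr eqOn_cohesiveEnergy_Ici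
      (eqOn_cohesiveEnergy_Ici hyz)
  have hleft (hzy : z ≤ y) : HasDerivWithinAt (cohesiveEnergy ψ ψd y) 0 (Iic y) z :=
    (hasDerivWithinAt_const z _ (ψ y)).congr eqOn_cohesiveEnergy_Iic (eqOn_cohesiveEnergy_Iic hzy)
  rcases lt_trichotomy z y with hzy | rfl | hyz
  · rw [cohesiveEnergyDerivZ, if_pos hzy]
    exact (hleft hzy.le).mono_of_mem_nhdsWithin (mem_nhdsWithin_of_mem_nhds (Iic_mem_nhds hzy))
  · rcases hy.eq_or_lt with rfl | hy
    · exact hright le_rfl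
    have hzero : cohesiveEnergyDerivZ ψd ψdd z z = 0 := by
      simp [cohesiveEnergyDerivZ, div_self (pow_ne_zero 2 hy.ne')]
    rw [hzero]
    have hboth := (hleft le_rfl).union (hzero ▸ hright le_rfl)
    rw [Iic_union_Ici] at hboth
    exact hboth.mono (subset_univ _)
  · exact (hright hyz.le).mono_of_mem_nhdsWithin (mem_nhdsWithin_of_mem_nhds (Ici_mem_nhds hyz))

lemma cohesiveEnergyDerivZ_nonneg (hg : 0 ≤ ψd z - z * ψdd z) (hy : 0 ≤ y) :
    0 ≤ cohesiveEnergyDerivZ ψd ψdd y z := by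
  unfold cohesiveEnergyDerivZ
  split_ifs with hzy
  · rfl
  · exact mul_nonneg (by linarith) <| sub_nonneg.2 <|
      div_le_one_of_le₀ (pow_le_pow_left₀ hy (not_lt.1 hzy) 2) (sq_nonneg z)

lemma cohesiveEnergyDerivZ_pos (hg : 0 < ψd z - z * ψdd z) (hy : 0 ≤ y) (hyz : y < z) :
    0 < cohesiveEnergyDerivZ ψd ψdd y z := by
  rw [cohesiveEnergyDerivZ, if_neg (not_lt.2 hyz.le)]
  exact mul_pos (by linarith) <| sub_pos.2 <|
    (div_lt_one (pow_pos (hy.trans_lt hyz) 2)).2 (pow_lt_pow_left₀ hyz hy two_ne_zero)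

lemma continuousOn_cohesiveEnergyDerivZ_formula
    (hg : ContinuousOn (fun z => ψd z - z * ψdd z) (Ici 0)) :
    ContinuousOn (fun p : ℝ × ℝ => (ψd p.2 - p.2 * ψdd p.2) / 2 * (1 - p.1 ^ 2 / p.2 ^ 2))
      {p | 0 < p.2} := by
  refine ((hg.comp continuous_snd.continuousOn fun _ (hp : 0 < _) => mem_Ici.2 hp.le).div_const
    2).mul ?_
  exact continuousOn_const.sub <| (continuous_fst.pow 2).continuousOn.div
    (continuous_snd.pow 2).continuousOn fun _ (hp : 0 < _) => pow_ne_zero 2 hp.ne'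

lemma continuousOn_uncurry_cohesiveEnergyDerivZ
    (hg : ContinuousOn (fun z => ψd z - z * ψdd z) (Ici 0)) :
    ContinuousOn (Function.uncurry (cohesiveEnergyDerivZ ψd ψdd)) {p | 0 ≤ p.1 ∧ p.1 < p.2} :=
  (continuousOn_cohesiveEnergyDerivZ_formula hg).mono (fun _ hp => hp.1.trans_lt hp.2) |>.congr
    fun _ hp => if_neg (not_lt.2 hp.2.le)

lemma continuousOn_cohesiveEnergyDerivZ
    (hg : ContinuousOn (fun z => ψd z - z * ψdd z) (Ici 0)) (hy : 0 ≤ y) :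
    ContinuousOn (cohesiveEnergyDerivZ ψd ψdd y) (Ici 0) := by
  rcases hy.eq_or_lt with rfl | hy
  · exact (hg.div_const 2).congr fun z hz => by
      simp [cohesiveEnergyDerivZ, not_lt.2 (mem_Ici.1 hz)]
  have hright : ContinuousOn (cohesiveEnergyDerivZ ψd ψdd y) (Ici y) :=
    (continuousOn_cohesiveEnergyDerivZ_formula hg).comp (Continuous.prodMk_right y).continuousOn
      (fun z hz => hy.trans_le hz) |>.congr fun z hz => if_neg (not_lt.2 hz)
  have hleft : ContinuousOn (cohesiveEnergyDerivZ ψd ψdd y) (Icc 0 y) := by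
    refine (continuousOn_const (c := (0 : ℝ))).congr fun z hz => ?_
    rcases hz.2.lt_or_eq with hzy | rfl
    · exact if_pos hzy
    · simp [cohesiveEnergyDerivZ, div_self (pow_ne_zero 2 hy.ne')]
  rw [← Icc_union_Ici_eq_Ici hy.le]
  exact hleft.union_of_isClosed hright isClosed_Icc isClosed_Ici

end Cohesive

theorem stmt_2_general (ψ ψd ψdd : ℝ → ℝ)
    (hmono : StrictMonoOn ψ (Ici (0:ℝ)))
    (hconc : ConcaveOn ℝ (Ici (0:ℝ)) ψ)
    (hd1 : ∀ z ∈ Ici (0:ℝ), HasDerivWithinAt ψ (ψd z) (Ici (0:ℝ)) z)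
    (hd2 : ∀ z ∈ Ici (0:ℝ), HasDerivWithinAt ψd (ψdd z) (Ici (0:ℝ)) z)
    (hd2cont : ContinuousOn ψdd (Ici (0:ℝ)))
    (Φ : ℝ → ℝ → ℝ)
    (hΦ : ∀ y ∈ Ici (0:ℝ), ∀ z ∈ Ici (0:ℝ),
      Φ y z = if y < z then ψd z / (2*z) * y^2 + ψ z - z * ψd z / 2 else ψ y) :
    ∃ Φz : ℝ → ℝ → ℝ,
      (∀ y ∈ Ici (0:ℝ), ∀ z ∈ Ici (0:ℝ),
        Φz y z = if z < y then 0 else (ψd z - z * ψdd z) / 2 * (1 - y^2 / z^2)) ∧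
      (∀ y ∈ Ici (0:ℝ), MonotoneOn (fun z => Φ y z) (Ici (0:ℝ))) ∧
      (∀ y ∈ Ici (0:ℝ), StrictMonoOn (fun z => Φ y z) (Ici y)) ∧
      (∀ y ∈ Ici (0:ℝ), ∀ z ∈ Ici (0:ℝ),
        HasDerivWithinAt (fun z' => Φ y z') (Φz y z) (Ici (0:ℝ)) z) ∧
      (∀ y ∈ Ici (0:ℝ), ContinuousOn (fun z => Φz y z) (Ici (0:ℝ))) ∧
      ContinuousOn (Function.uncurry Φz) {p : ℝ × ℝ | 0 ≤ p.1 ∧ p.1 < p.2} ∧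
      (∀ y z : ℝ, 0 ≤ y → y < z → 0 < Φz y z) := by
  have hgain : ∀ z ∈ Ici (0:ℝ), 0 < ψd z - z * ψdd z := fun z hz => by
    have hψd := hconc.deriv_pos_of_strictMonoOn hmono hz (hz.trans (lt_add_one z).le)
      (lt_add_one z) (hd1 z hz)
    have hψdd := hconc.secondDeriv_nonpos hd1 hz (hd2 z hz)
    nlinarith [mem_Ici.1 hz]
  have hgainCont : ContinuousOn (fun z => ψd z - z * ψdd z) (Ici 0) :=
    ContinuousOn.sub (fun z hz => (hd2 z hz).continuousWithinAt) (continuousOn_id.mul hd2cont)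
  have hderiv : ∀ y ∈ Ici (0:ℝ), ∀ z ∈ Ici (0:ℝ),
      HasDerivWithinAt (Φ y) (cohesiveEnergyDerivZ ψd ψdd y z) (Ici 0) z := fun y hy z hz =>
    (hasDerivWithinAt_cohesiveEnergy (hd1 z hz) (hd2 z hz) hy hz).congr
      (fun w hw => hΦ y hy w hw) (hΦ y hy z hz)
  have hcont : ∀ y ∈ Ici (0:ℝ), ContinuousOn (Φ y) (Ici 0) :=
    fun y hy z hz => (hderiv y hy z hz).continuousWithinAt
  refine ⟨cohesiveEnergyDerivZ ψd ψdd, fun _ _ _ _ => rfl, fun y hy => ?_, fun y hy => ?_, hderiv,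
    fun y hy => continuousOn_cohesiveEnergyDerivZ hgainCont hy,
    continuousOn_uncurry_cohesiveEnergyDerivZ hgainCont,
    fun y z hy hyz => cohesiveEnergyDerivZ_pos (hgain z (hy.trans hyz.le)) hy hyz⟩
  · refine monotoneOn_of_hasDerivWithinAt_nonneg (convex_Ici 0) (hcont y hy)
      (fun z hz => (hderiv y hy z (interior_subset hz)).mono interior_subset)
      fun z hz => cohesiveEnergyDerivZ_nonneg (hgain z (interior_subset hz)).le hy
  · have hsub : interior (Ici y) ⊆ Ici 0 := interior_subset.trans (Ici_subset_Ici.2 hy)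
    refine strictMonoOn_of_hasDerivWithinAt_pos (convex_Ici y)
      ((hcont y hy).mono (Ici_subset_Ici.2 hy))
      (fun z hz => (hderiv y hy z (hsub hz)).mono hsub)
      fun z hz => cohesiveEnergyDerivZ_pos (hgain z (hsub hz)) hy (by rwa [interior_Ici] at hz)

/-- properties of `z ↦ Φ(y,z)` and the explicit form of `∂_zΦ`. -/
theorem stmt_2 (ψ ψd ψdd : ℝ → ℝ) (lam : ℝ) (hlam : 0 < lam)
    (hψmap : ∀ z ∈ Ici (0:ℝ), 0 ≤ ψ z)
    (hmono : StrictMonoOn ψ (Ici (0:ℝ)))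
    (hbdd : BddAbove (ψ '' Ici (0:ℝ)))
    (hconc : ConcaveOn ℝ (Ici (0:ℝ)) ψ)
    (hd1 : ∀ z ∈ Ici (0:ℝ), HasDerivWithinAt ψ (ψd z) (Ici (0:ℝ)) z)
    (hd2 : ∀ z ∈ Ici (0:ℝ), HasDerivWithinAt ψd (ψdd z) (Ici (0:ℝ)) z)
    (hd2cont : ContinuousOn ψdd (Ici (0:ℝ)))
    (hψ0 : ψ 0 = 0) (hψd0 : 0 < ψd 0)
    (hlow : ∀ z ∈ Ici (0:ℝ), -lam ≤ ψdd z)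
    (Φ : ℝ → ℝ → ℝ)
    (hΦ : ∀ y ∈ Ici (0:ℝ), ∀ z ∈ Ici (0:ℝ),
      Φ y z = if y < z then ψd z / (2*z) * y^2 + ψ z - z * ψd z / 2 else ψ y) :
    ∃ Φz : ℝ → ℝ → ℝ,
      (∀ y ∈ Ici (0:ℝ), ∀ z ∈ Ici (0:ℝ),
        Φz y z = if z < y then 0 else (ψd z - z * ψdd z) / 2 * (1 - y^2 / z^2)) ∧
      (∀ y ∈ Ici (0:ℝ), MonotoneOn (fun z => Φ y z) (Ici (0:ℝ))) ∧
      (∀ y ∈ Ici (0:ℝ), StrictMonoOn (fun z => Φ y z) (Ici y)) ∧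
      (∀ y ∈ Ici (0:ℝ), ∀ z ∈ Ici (0:ℝ),
        HasDerivWithinAt (fun z' => Φ y z') (Φz y z) (Ici (0:ℝ)) z) ∧
      (∀ y ∈ Ici (0:ℝ), ContinuousOn (fun z => Φz y z) (Ici (0:ℝ))) ∧
      ContinuousOn (Function.uncurry Φz) {p : ℝ × ℝ | 0 ≤ p.1 ∧ p.1 < p.2} ∧
      (∀ y z : ℝ, 0 ≤ y → y < z → 0 < Φz y z) :=
  stmt_2_general ψ ψd ψdd hmono hconc hd1 hd2 hd2cont Φ hΦ
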